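/- Let λ_0 ∈ (0,1], let S be a d×d correlation matrix with S − λ_0 I positive semidefinite, and let Σ be a positive definite d×d correlation matrix. Let S^{1/2} Σ S^{1/2} = U Λ Uᵀ be a spectral decomposition, with U orthogonal and Λ = diag(λ_1,…,λ_d) (all λ_i > 0). For a real symmetric d×d matrix M, set Δ = Uᵀ S^{1/2} M S^{1/2} U. Then Σ_{i,j=1}^d Δ_{ij}² / (√(λ_i λ_j)(√λ_i + √λ_j)) ≥ (λ_0² / (2 d³)) ‖M‖²_F. -/

import Mathlib

open Matrix Real

/-- The positive semidefinite square root of a positive semidefinite real matrix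
(junk value `0` on matrices that are not positive semidefinite). -/
noncomputable def msqrt {d : ℕ} (A : Matrix (Fin d) (Fin d) ℝ) : Matrix (Fin d) (Fin d) ℝ :=
  open scoped Classical in
  if h : A.PosSemidef then
    (h.1.eigenvectorUnitary : Matrix (Fin d) (Fin d) ℝ) *
      Matrix.diagonal ((↑) ∘ (√·) ∘ h.1.eigenvalues) *
      (star (h.1.eigenvectorUnitary : Matrix (Fin d) (Fin d) ℝ))
  else 0

/-- The squared Bures–Wasserstein distance
`B²(S,Q) = tr S + tr Q − 2 tr((S^{1/2} Q S^{1/2})^{1/2})`. -/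
noncomputable def sqB {d : ℕ} (S Q : Matrix (Fin d) (Fin d) ℝ) : ℝ :=
  S.trace + Q.trace - 2 * (msqrt (msqrt S * Q * msqrt S)).trace

/-- The Bures–Wasserstein distance `B(S,Q)`. -/
noncomputable def bw {d : ℕ} (S Q : Matrix (Fin d) (Fin d) ℝ) : ℝ :=
  Real.sqrt (sqB S Q)

/-- The Frobenius (Hilbert–Schmidt) norm of a matrix. -/
noncomputable def frobNorm {d : ℕ} (A : Matrix (Fin d) (Fin d) ℝ) : ℝ :=
  Real.sqrt (∑ i, ∑ j, (A i j) ^ 2)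

/-- The spectral (`ℓ²`-operator) norm of a matrix. -/
noncomputable def opNorm {d : ℕ} (A : Matrix (Fin d) (Fin d) ℝ) : ℝ :=
  ‖Matrix.toEuclideanCLM (𝕜 := ℝ) A‖

/-- A correlation matrix: real symmetric positive semidefinite with unit diagonal. -/
def IsCorrMat {d : ℕ} (A : Matrix (Fin d) (Fin d) ℝ) : Prop :=
  A.PosSemidef ∧ ∀ i, A i i = 1

/-- The 2×2 correlation matrix with off-diagonal entry `ρ`. -/
def corr2 (ρ : ℝ) : Matrix (Fin 2) (Fin 2) ℝ := !![1, ρ; ρ, 1]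

/-- The Gaussian optimal transport matrix `T_Σ^Q = Σ^{-1/2} (Σ^{1/2} Q Σ^{1/2})^{1/2} Σ^{-1/2}`. -/
noncomputable def otMap {d : ℕ} (S Q : Matrix (Fin d) (Fin d) ℝ) : Matrix (Fin d) (Fin d) ℝ :=
  (msqrt S)⁻¹ * msqrt (msqrt S * Q * msqrt S) * (msqrt S)⁻¹

/-- Symmetric normalization `D(Σ)^{-1/2} Σ D(Σ)^{-1/2}` of a matrix by its diagonal. -/
noncomputable def symNormalize {d : ℕ} (S : Matrix (Fin d) (Fin d) ℝ) :
    Matrix (Fin d) (Fin d) ℝ :=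
  Matrix.diagonal (fun i => (Real.sqrt (S i i))⁻¹) * S *
    Matrix.diagonal (fun i => (Real.sqrt (S i i))⁻¹)


section AuxLemmas
variable {d : ℕ}

private lemma msqrt_spec {A : Matrix (Fin d) (Fin d) ℝ} (hA : A.PosSemidef) :
    (msqrt A).PosSemidef ∧ msqrt A * msqrt A = A := by
  rw [msqrt, dif_pos hA]
  set U := (hA.1.eigenvectorUnitary : Matrix (Fin d) (Fin d) ℝ) with hUdef
  have hUU : star U * U = 1 :=
    Matrix.mem_unitaryGroup_iff'.mp hA.1.eigenvectorUnitary.2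
  constructor
  · have hD : (Matrix.diagonal (((↑) ∘ (√·) ∘ hA.1.eigenvalues) : Fin d → ℝ)).PosSemidef :=
      Matrix.posSemidef_diagonal_iff.mpr fun i => by simp [Real.sqrt_nonneg]
    have := hD.mul_mul_conjTranspose_same U
    rwa [← Matrix.star_eq_conjTranspose] at this
  · have hsq : Matrix.diagonal (((↑) ∘ (√·) ∘ hA.1.eigenvalues) : Fin d → ℝ) *
        Matrix.diagonal (((↑) ∘ (√·) ∘ hA.1.eigenvalues) : Fin d → ℝ) =
        Matrix.diagonal (RCLike.ofReal ∘ hA.1.eigenvalues) := by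
      rw [Matrix.diagonal_mul_diagonal]
      congr 1
      funext i
      simp [Real.mul_self_sqrt (hA.eigenvalues_nonneg i)]
    conv_rhs => rw [hA.1.spectral_theorem, Unitary.conjStarAlgAut_apply]
    rw [← hsq, ← hUdef]
    simp only [Matrix.mul_assoc]
    rw [← Matrix.mul_assoc (star U) U, hUU, Matrix.one_mul]

private lemma psd_diag_nonneg' {A : Matrix (Fin d) (Fin d) ℝ} (hA : A.PosSemidef) (i : Fin d) :
    0 ≤ A i i := by
  exact hA.diag_nonneg

private lemma psd_trace_nonneg' {A : Matrix (Fin d) (Fin d) ℝ} (hA : A.PosSemidef) :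
    0 ≤ A.trace :=
  Finset.sum_nonneg fun i _ => psd_diag_nonneg' hA i

private lemma psd_quad' {A : Matrix (Fin d) (Fin d) ℝ} (hA : A.PosSemidef) (i j : Fin d)
    (c : ℝ) : 0 ≤ A i i + c * A i j + c * A j i + c ^ 2 * A j j := by
  have h := hA.dotProduct_mulVec_nonneg (Pi.single i 1 + Pi.single j c)
  simp only [star_trivial, Matrix.mulVec_add, dotProduct_add, add_dotProduct,
    Matrix.mulVec_single, single_dotProduct, Matrix.col, Matrix.transpose_apply, Pi.smul_apply,
    op_smul_eq_mul] at h
  nlinarith [h]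

private lemma corr_abs_le_one' {A : Matrix (Fin d) (Fin d) ℝ} (hpsd : A.PosSemidef)
    (hdiag : ∀ i, A i i = 1) (i j : Fin d) : |A i j| ≤ 1 := by
  have hsym : A j i = A i j := by
    have h := hpsd.1
    calc A j i = Aᴴ i j := by simp [Matrix.conjTranspose_apply]
    _ = A i j := by rw [h]
  have h1 := psd_quad' hpsd i j 1
  have h2 := psd_quad' hpsd i j (-1)
  rw [hdiag i, hdiag j, hsym] at h1 h2
  rw [abs_le]; constructor <;> nlinarith

private lemma trace_mul_psd_nonneg' {P Q : Matrix (Fin d) (Fin d) ℝ}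
    (hP : P.PosSemidef) (hQ : Q.PosSemidef) : 0 ≤ (Q * P).trace := by
  obtain ⟨hQsqrt_psd, hQsqrt_sq⟩ := msqrt_spec hQ
  have h1 : Q * P = msqrt Q * (msqrt Q * P) := by
    rw [← Matrix.mul_assoc, hQsqrt_sq]
  rw [h1, Matrix.trace_mul_comm, Matrix.mul_assoc]
  have hpsd : (msqrt Q * P * (msqrt Q)ᴴ).PosSemidef := hP.mul_mul_conjTranspose_same (msqrt Q)
  rw [hQsqrt_psd.1] at hpsd
  exact psd_trace_nonneg' (by rwa [Matrix.mul_assoc] at hpsd)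

private lemma frob_sq_eq_trace' (A : Matrix (Fin d) (Fin d) ℝ) :
    ∑ i, ∑ j, (A i j) ^ 2 = (Aᵀ * A).trace := by
  rw [Matrix.trace, Finset.sum_comm]
  simp [Matrix.mul_apply, Matrix.diag, pow_two]

private lemma conj_mul_conj' (U A B : Matrix (Fin d) (Fin d) ℝ) (hU : U * Uᵀ = 1) :
    (Uᵀ * A * U) * (Uᵀ * B * U) = Uᵀ * (A * B) * U := by
  simp only [Matrix.mul_assoc]
  rw [← Matrix.mul_assoc U Uᵀ, hU, Matrix.one_mul]

end AuxLemmas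

/-- Let `λ₀ ∈ (0,1]`, let `S` be a `d×d` correlation matrix with
`S − λ₀ I ⪰ 0`, and let `Σ` be a positive definite correlation matrix.  Let
`S^{1/2} Σ S^{1/2} = U Λ Uᵀ` with `U` orthogonal and `Λ = diag(λ₁,…,λ_d)`, `λ_i > 0`.
For a real symmetric `M`, put `Δ = Uᵀ S^{1/2} M S^{1/2} U`.  Then
`Σ_{i,j} Δ_{ij}² / (√(λ_i λ_j)(√λ_i + √λ_j)) ≥ (λ₀²/(2 d³)) ‖M‖²_F`. -/
theorem bw_hessian_quadratic_form_lowerBound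
    {d : ℕ} (lam0 : ℝ) (hlam0 : lam0 ∈ Set.Ioc (0 : ℝ) 1)
    (S Sig : Matrix (Fin d) (Fin d) ℝ)
    (hScorr : IsCorrMat S)
    (hSlb : (S - lam0 • (1 : Matrix (Fin d) (Fin d) ℝ)).PosSemidef)
    (hSigcorr : IsCorrMat Sig) (hSigpd : Sig.PosDef)
    (U : Matrix (Fin d) (Fin d) ℝ) (hU : U * Uᵀ = 1)
    (lam : Fin d → ℝ) (hlampos : ∀ i, 0 < lam i)
    (hspec : msqrt S * Sig * msqrt S = U * Matrix.diagonal lam * Uᵀ)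
    (M : Matrix (Fin d) (Fin d) ℝ) (hM : M.IsSymm) :
    (lam0 ^ 2 / (2 * (d : ℝ) ^ 3)) * (frobNorm M) ^ 2 ≤
      ∑ i, ∑ j, ((Uᵀ * msqrt S * M * msqrt S * U) i j) ^ 2 /
        (Real.sqrt (lam i * lam j) * (Real.sqrt (lam i) + Real.sqrt (lam j))) := by
  obtain ⟨hlam0pos, hlam0le⟩ := hlam0
  obtain ⟨hSpsd, hSdiag⟩ := hScorr
  obtain ⟨hSigpsd, hSigdiag⟩ := hSigcorr
  rcases Nat.eq_zero_or_pos d with hd | hd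
  · subst hd
    simp [frobNorm]
  have hdR : (1:ℝ) ≤ (d:ℝ) := by exact_mod_cast hd
  have hdpos : (0:ℝ) < (d:ℝ) := by linarith
  have hRdef : msqrt S = msqrt S := rfl
  set R := msqrt S with hR
  have hRpsd : R.PosSemidef := by rw [hRdef]; exact (msqrt_spec hSpsd).1
  have hRR : R * R = S := by rw [hRdef]; exact (msqrt_spec hSpsd).2
  have hRsymm : Rᵀ = R := by
    have h : Rᴴ = R := hRpsd.1
    rwa [Matrix.conjTranspose_eq_transpose_of_trivial] at h
  have hMsymm : Mᵀ = M := hM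
  have hUtU : Uᵀ * U = 1 := mul_eq_one_comm.mp hU
  -- eigenvalue bounds
  have e1 : (U * Matrix.diagonal lam * Uᵀ).trace = ∑ i, lam i := by
    rw [Matrix.trace_mul_cycle, hUtU, Matrix.one_mul, Matrix.trace_diagonal]
  have e2 : (R * Sig * R).trace = (S * Sig).trace := by
    rw [Matrix.trace_mul_cycle, hRR]
  have htrace : ∑ i, lam i = (S * Sig).trace := by rw [← e1, ← hspec, e2]
  have htrSSig : (S * Sig).trace ≤ (d:ℝ)^2 := by
    rw [Matrix.trace]
    have hle : ∀ i : Fin d, (S * Sig).diag i ≤ (d:ℝ) := by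
      intro i
      rw [Matrix.diag_apply, Matrix.mul_apply]
      calc ∑ j, S i j * Sig j i ≤ ∑ _j : Fin d, (1:ℝ) := by
            refine Finset.sum_le_sum fun j _ => ?_
            calc S i j * Sig j i ≤ |S i j * Sig j i| := le_abs_self _
            _ = |S i j| * |Sig j i| := abs_mul _ _
            _ ≤ 1 * 1 := by
                have := corr_abs_le_one' hSpsd hSdiag i j
                have := corr_abs_le_one' hSigpsd hSigdiag j i
                exact mul_le_mul (by assumption) (by assumption) (abs_nonneg _) zero_le_one
            _ = 1 := by ring
      _ = (d:ℝ) := by simp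
    calc ∑ i, (S * Sig).diag i ≤ ∑ _i : Fin d, (d:ℝ) := Finset.sum_le_sum fun i _ => hle i
    _ = (d:ℝ)^2 := by simp [pow_two]
  have hlamle : ∀ i, lam i ≤ (d:ℝ)^2 := by
    intro i
    calc lam i ≤ ∑ j, lam j :=
          Finset.single_le_sum (fun j _ => (hlampos j).le) (Finset.mem_univ i)
    _ = (S * Sig).trace := htrace
    _ ≤ (d:ℝ)^2 := htrSSig
  have hsqrtle : ∀ i, Real.sqrt (lam i) ≤ (d:ℝ) := by
    intro i
    calc Real.sqrt (lam i) ≤ Real.sqrt ((d:ℝ)^2) := Real.sqrt_le_sqrt (hlamle i)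
    _ = (d:ℝ) := Real.sqrt_sq hdpos.le
  -- trace identities
  have hDelta : Uᵀ * R * M * R * U = Uᵀ * (R * M * R) * U := by
    simp only [Matrix.mul_assoc]
  have hAt : (R * M * R)ᵀ = R * M * R := by
    simp only [Matrix.transpose_mul, hRsymm, hMsymm, Matrix.mul_assoc]
  have hDt : (Uᵀ * (R * M * R) * U)ᵀ = Uᵀ * (R * M * R) * U := by
    simp only [Matrix.transpose_mul, Matrix.transpose_transpose, hRsymm, hMsymm,
      Matrix.mul_assoc]
  have tsum : ∑ i, ∑ j, ((Uᵀ * R * M * R * U) i j)^2 = ((R * M * R) * (R * M * R)).trace := by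
    rw [hDelta, frob_sq_eq_trace', hDt, conj_mul_conj' U _ _ hU, Matrix.trace_mul_cycle,
      ← Matrix.mul_assoc, hU, Matrix.one_mul]
  have h5 : (R * M * R) * (R * M * R) = R * (M * (S * (M * R))) := by
    simp only [Matrix.mul_assoc]
    rw [← Matrix.mul_assoc R R, hRR]
  have h6 : ((R * M * R) * (R * M * R)).trace = (M * (S * (M * S))).trace := by
    rw [h5, Matrix.trace_mul_comm]
    simp only [Matrix.mul_assoc]
    rw [hRR]
  -- PSD trace inequalities
  have hQpsd : (M * S * M).PosSemidef := by
    have h := hSpsd.conjTranspose_mul_mul_same M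
    rwa [Matrix.conjTranspose_eq_transpose_of_trivial, hMsymm] at h
  have t1 : 0 ≤ (M * (S * (M * S))).trace - lam0 * (M * (S * M)).trace := by
    have h := trace_mul_psd_nonneg' hSlb hQpsd
    have hexp : (M * S * M) * (S - lam0 • (1 : Matrix (Fin d) (Fin d) ℝ)) =
        M * (S * (M * S)) - lam0 • (M * (S * M)) := by
      rw [Matrix.mul_sub]
      simp only [Matrix.mul_smul, Matrix.mul_one, Matrix.mul_assoc]
    rw [hexp, Matrix.trace_sub, Matrix.trace_smul, smul_eq_mul] at h
    linarith
  have t2 : 0 ≤ (M * (S * M)).trace - lam0 * (M * M).trace := by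
    have h := trace_mul_psd_nonneg' (hSlb.conjTranspose_mul_mul_same M) Matrix.PosSemidef.one
    rw [Matrix.one_mul, Matrix.conjTranspose_eq_transpose_of_trivial, hMsymm] at h
    have hexp : M * (S - lam0 • (1 : Matrix (Fin d) (Fin d) ℝ)) * M =
        M * (S * M) - lam0 • (M * M) := by
      rw [Matrix.mul_sub, Matrix.sub_mul]
      simp only [Matrix.mul_smul, Matrix.smul_mul, Matrix.mul_one, Matrix.mul_assoc]
    rw [hexp, Matrix.trace_sub, Matrix.trace_smul, smul_eq_mul] at h
    linarith
  have t3 : (M * M).trace = ∑ i, ∑ j, (M i j)^2 := by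
    rw [frob_sq_eq_trace', hMsymm]
  have hMsumnn : (0:ℝ) ≤ ∑ i, ∑ j, (M i j)^2 :=
    Finset.sum_nonneg fun i _ => Finset.sum_nonneg fun j _ => sq_nonneg _
  have hF : (frobNorm M)^2 = ∑ i, ∑ j, (M i j)^2 := Real.sq_sqrt hMsumnn
  have key : lam0^2 * (frobNorm M)^2 ≤ ∑ i, ∑ j, ((Uᵀ * R * M * R * U) i j)^2 := by
    rw [tsum, h6, hF, ← t3]
    nlinarith [t1, t2, hlam0pos, psd_trace_nonneg' hQpsd]
  -- denominator bounds
  have hden_pos : ∀ i j : Fin d, 0 <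
      Real.sqrt (lam i * lam j) * (Real.sqrt (lam i) + Real.sqrt (lam j)) := by
    intro i j
    have h1 : 0 < Real.sqrt (lam i * lam j) :=
      Real.sqrt_pos.mpr (mul_pos (hlampos i) (hlampos j))
    have h2 : 0 < Real.sqrt (lam i) := Real.sqrt_pos.mpr (hlampos i)
    have h3 : 0 ≤ Real.sqrt (lam j) := Real.sqrt_nonneg _
    nlinarith
  have hden_le : ∀ i j : Fin d,
      Real.sqrt (lam i * lam j) * (Real.sqrt (lam i) + Real.sqrt (lam j)) ≤ 2 * (d:ℝ)^3 := by
    intro i j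
    rw [Real.sqrt_mul (hlampos i).le]
    have h1 := hsqrtle i
    have h2 := hsqrtle j
    have h3 : 0 ≤ Real.sqrt (lam i) := Real.sqrt_nonneg _
    have h4 : 0 ≤ Real.sqrt (lam j) := Real.sqrt_nonneg _
    have h5 : Real.sqrt (lam i) * Real.sqrt (lam j) ≤ (d:ℝ) * (d:ℝ) :=
      mul_le_mul h1 h2 h4 hdpos.le
    have h6 : Real.sqrt (lam i) + Real.sqrt (lam j) ≤ 2 * (d:ℝ) := by linarith
    calc Real.sqrt (lam i) * Real.sqrt (lam j) * (Real.sqrt (lam i) + Real.sqrt (lam j))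
        ≤ ((d:ℝ) * (d:ℝ)) * (2 * (d:ℝ)) := by
          apply mul_le_mul h5 h6 (by positivity) (by positivity)
    _ = 2 * (d:ℝ)^3 := by ring
  have hd3pos : (0:ℝ) < 2 * (d:ℝ)^3 := by positivity
  calc lam0 ^ 2 / (2 * (d:ℝ) ^ 3) * frobNorm M ^ 2
      = (lam0 ^ 2 * frobNorm M ^ 2) / (2 * (d:ℝ) ^ 3) := by ring
    _ ≤ (∑ i, ∑ j, ((Uᵀ * R * M * R * U) i j)^2) / (2 * (d:ℝ) ^ 3) := by gcongr
    _ = ∑ i, ∑ j, ((Uᵀ * R * M * R * U) i j)^2 / (2 * (d:ℝ) ^ 3) := by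
        simp [Finset.sum_div]
    _ ≤ ∑ i, ∑ j, ((Uᵀ * R * M * R * U) i j)^2 /
          (Real.sqrt (lam i * lam j) * (Real.sqrt (lam i) + Real.sqrt (lam j))) := by
        refine Finset.sum_le_sum fun i _ => Finset.sum_le_sum fun j _ => ?_
        exact div_le_div_of_nonneg_left (sq_nonneg _) (hden_pos i j) (hden_le i j)
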